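/- arXiv:1606.07125 — 6 statements merged into one kernel-verified Lean document; each statement's English description precedes it below -/
import Mathlib

section
/- For every natural number m, the degree of H_m(z) satisfies deg H_m ≤ ⌊m/r⌋. -/
/-!
Let `Q_k` be the coefficient of `t^k` in `P + z t^r`, so `deg Q_k ≤ k / r`. Comparing
coefficients of `t^m` in `H · (P + z t^r) = 1` expresses `H_m Q_0` through the products
`H_i Q_{m-i}` with `i < m`; the constant `Q_0` is invertible since `H_0 Q_0 = 1`. As
`i / r + (m - i) / r ≤ m / r`, strong induction on `m` gives the bound.
-/

open Polynomial Finset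

section

variable {R : Type*} [CommRing R]

theorem natDegree_C_add_ite_X_le_div (a : R) {k r : ℕ} (hr : 0 < r) :
    (C a + if k = r then (X : R[X]) else 0).natDegree ≤ k / r := by
  rw [natDegree_C_add]
  split_ifs with hk
  · subst hk
    rw [Nat.div_self hr]
    exact natDegree_X_le
  · simp

theorem natDegree_coeff_le_div_of_mul_eq_one {A B : PowerSeries R[X]} {r : ℕ}
    (hAB : A * B = 1) (hB : ∀ k, (PowerSeries.coeff k B).natDegree ≤ k / r) (m : ℕ) :
    (PowerSeries.coeff m A).natDegree ≤ m / r := by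
  obtain ⟨b, hb⟩ : ∃ b, PowerSeries.coeff 0 B = C b :=
    ⟨_, eq_C_of_natDegree_eq_zero (Nat.le_zero.mp (by simpa using hB 0))⟩
  have hb_unit : IsUnit b := by
    rw [← isUnit_C, ← hb]
    exact IsUnit.of_mul_eq_one_right (PowerSeries.coeff 0 A)
      (by simpa using congrArg (PowerSeries.coeff 0) hAB)
  induction m using Nat.strong_induction_on with
  | _ m ih =>
    have hsplit : PowerSeries.coeff m A * C b = PowerSeries.coeff m (A * B) -
        ∑ i ∈ range m, PowerSeries.coeff i A * PowerSeries.coeff (m - i) B := by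
      rw [PowerSeries.coeff_mul, Nat.sum_antidiagonal_eq_sum_range_succ_mk, sum_range_succ,
        Nat.sub_self, hb]
      ring
    rw [← natDegree_mul_C_eq_of_mul_eq_one hb_unit.mul_val_inv, hsplit]
    refine (natDegree_sub_le _ _).trans (max_le ?_ ?_)
    · rw [hAB, PowerSeries.coeff_one]
      split_ifs <;> simp
    · refine natDegree_sum_le_of_forall_le _ _ fun i hi => ?_
      have him : i < m := mem_range.mp hi
      calc (PowerSeries.coeff i A * PowerSeries.coeff (m - i) B).natDegree
          ≤ i / r + (m - i) / r := natDegree_mul_le.trans (add_le_add (ih i him) (hB _))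
        _ ≤ (i + (m - i)) / r := Nat.div_add_div_le_add_div
        _ = m / r := by rw [Nat.add_sub_cancel' him.le]

end

theorem degree_H_le_general
    (r : ℕ) (hr : 0 < r)
    (P : Polynomial ℝ)
    (H : ℕ → Polynomial ℝ)
    (hH : PowerSeries.mk H *
        PowerSeries.mk (fun k => Polynomial.C (P.coeff k) +
          if k = r then (Polynomial.X : Polynomial ℝ) else 0) = 1) :
    ∀ m : ℕ, (H m).natDegree ≤ m / r := by
  intro m
  simpa using natDegree_coeff_le_div_of_mul_eq_one hH
    (fun k => by
      simpa only [PowerSeries.coeff_mk] using natDegree_C_add_ite_X_le_div (P.coeff k) hr) m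

/-- For every `m`, the degree of `H m` is at most `⌊m/r⌋`. -/
theorem degree_H_le
    (n r : ℕ) (hn : 0 < n) (hr : 0 < r)
    (P : Polynomial ℝ) (c : ℝ) (hc : c ≠ 0)
    (τv : Fin n → ℝ) (hτmono : Monotone τv) (hτpos : ∀ k, 0 < τv k)
    (hP : P = Polynomial.C c * ∏ k, (Polynomial.X - Polynomial.C (τv k)))
    (hP0 : 0 < P.eval 0)
    (H : ℕ → Polynomial ℝ)
    (hH : PowerSeries.mk H *
        PowerSeries.mk (fun k => Polynomial.C (P.coeff k) +
          if k = r then (Polynomial.X : Polynomial ℝ) else 0) = 1) :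
    ∀ m : ℕ, (H m).natDegree ≤ m / r :=
  degree_H_le_general r hr P H hH
end

section
/- Let θ be a real number with sin θ ≠ 0 and let r be a positive integer. Then the polynomial S(τ) := P(τ e^{iθ}) − e^{2irθ} P(τ e^{−iθ}) in the variable τ is not identically zero, and all of its complex zeros are real and simple (pairwise distinct). -/
/-!
Write `e = e^{iθ}` and `ε = e^{2irθ}`, so `S(w) = P(e w) - ε P(ē w)` with `|ε| = 1`.
Since `|e w - t|² - |ē w - t|² = 4 t Im e Im w`, for `w ∉ ℝ` every factor `e w - τₖ` of
`P(e w)` is strictly longer (or every one strictly shorter) than the factor `ē w - τₖ` of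
`P(ē w)`, so `|P(e w)| ≠ |P(ē w)|` and `S(w) ≠ 0`. At a real zero `w`, `P(ē w)` and `P'(ē w)`
are the conjugates of `P(e w)` and `P'(e w)`; if also `S'(w) = 0`, both `P(e w)` and
`e P'(e w)` equal `ε` times their own conjugates, which forces
`e P'(e w) / P(e w) = ∑ₖ e / (e w - τₖ)` to be real. But each summand has imaginary part
`-τₖ Im e / |e w - τₖ|²`, all of the same strict sign.
-/

open Polynomial Complex Finset ComplexConjugate

lemma Finset.prod_lt_prod_of_nonempty_of_nonneg {ι R : Type*} [CommMonoidWithZero R]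
    [PartialOrder R] [ZeroLEOneClass R] [PosMulStrictMono R] [Nontrivial R]
    {s : Finset ι} {f g : ι → R} (hs : s.Nonempty) (hf : ∀ i ∈ s, 0 ≤ f i)
    (hfg : ∀ i ∈ s, f i < g i) : ∏ i ∈ s, f i < ∏ i ∈ s, g i := by
  by_cases hzero : ∃ i ∈ s, f i = 0
  · obtain ⟨i, hi, hfi⟩ := hzero
    rw [prod_eq_zero hi hfi]
    exact prod_pos fun j hj => (hf j hj).trans_lt (hfg j hj)
  · push Not at hzero
    exact prod_lt_prod_of_nonempty (fun i hi => (hf i hi).lt_of_ne' (hzero i hi)) hfg hs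

lemma Polynomial.eval_derivative_prod_X_sub_C {ι K : Type*} [Fintype ι] [Field K] (τ : ι → K)
    {z : K} (hz : ∀ k, z ≠ τ k) :
    (∏ k, (X - C (τ k))).derivative.eval z =
      (∏ k, (X - C (τ k))).eval z * ∑ k, (z - τ k)⁻¹ := by
  classical
  simp only [derivative_prod_finset, derivative_X_sub_C, mul_one, eval_finsetSum, eval_prod,
    eval_sub, eval_X, eval_C, mul_sum]
  refine sum_congr rfl fun k _ => ?_
  rw [← mul_prod_erase univ (fun j => z - τ j) (mem_univ k), mul_comm (z - τ k),
    mul_inv_cancel_right₀ (sub_ne_zero.2 (hz k))]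

namespace Complex

lemma normSq_mul_sub_ofReal (e w : ℂ) (t : ℝ) :
    normSq (e * w - t) = normSq (conj e * w - t) + 4 * t * e.im * w.im := by
  simp only [normSq_apply, mul_re, mul_im, sub_re, sub_im, conj_re, conj_im, ofReal_re,
    ofReal_im]
  ring

lemma mul_sub_ofReal_ne_zero {e w : ℂ} (he : e.im ≠ 0) (hw : w.im = 0) {t : ℝ} (ht : t ≠ 0) :
    e * w - t ≠ 0 := by
  intro h
  have hre : w.re = 0 :=
    (mul_eq_zero.1 (by simpa [hw] using congrArg im h)).resolve_left he
  have hw0 : w = 0 := ext hre hw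
  simp [hw0, ht] at h

lemma im_div_mul_sub_ofReal (e : ℂ) {w : ℂ} (hw : w.im = 0) (t : ℝ) :
    (e / (e * w - t)).im = -e.im * (t / normSq (e * w - t)) := by
  simp only [div_im, sub_re, sub_im, mul_re, mul_im, ofReal_re, ofReal_im, hw]
  ring

lemma im_div_eq_zero_of_eq_mul_conj {a b ε : ℂ} (ha : a ≠ 0) (hA : a = ε * conj a)
    (hB : b = ε * conj b) : (b / a).im = 0 := by
  have hε : ε ≠ 0 := by
    rintro rfl
    exact ha (by simpa using hA)
  rw [← conj_eq_iff_im]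
  calc conj (b / a) = conj b / conj a := map_div₀ _ _ _
    _ = (ε * conj b) / (ε * conj a) := (mul_div_mul_left _ _ hε).symm
    _ = b / a := by rw [← hA, ← hB]

end Complex

section

variable {ι : Type*} [Fintype ι] {τ : ι → ℝ}

lemma prod_norm_conj_mul_sub_lt [Nonempty ι] (hτ : ∀ k, 0 < τ k) {e w : ℂ}
    (h : 0 < e.im * w.im) : ∏ k, ‖conj e * w - τ k‖ < ∏ k, ‖e * w - τ k‖ := by
  refine prod_lt_prod_of_nonempty_of_nonneg univ_nonempty (fun k _ => norm_nonneg _)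
    fun k _ => ?_
  rw [← sq_lt_sq₀ (norm_nonneg _) (norm_nonneg _), Complex.sq_norm, Complex.sq_norm,
    normSq_mul_sub_ofReal e]
  nlinarith [mul_pos (hτ k) h]

lemma im_eq_zero_of_prod_norm_eq [Nonempty ι] (hτ : ∀ k, 0 < τ k) {e w : ℂ} (he : e.im ≠ 0)
    (h : ∏ k, ‖e * w - τ k‖ = ∏ k, ‖conj e * w - τ k‖) : w.im = 0 := by
  by_contra hw
  rcases (mul_ne_zero he hw).lt_or_gt with hneg | hpos
  · have hlt := prod_norm_conj_mul_sub_lt hτ (e := conj e) (w := w)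
      (by simpa [conj_im] using neg_pos.2 hneg)
    rw [conj_conj] at hlt
    exact hlt.ne h
  · exact (prod_norm_conj_mul_sub_lt hτ hpos).ne' h

lemma im_mul_sum_inv_ne_zero [Nonempty ι] (hτ : ∀ k, 0 < τ k) {e w : ℂ} (he : e.im ≠ 0)
    (hw : w.im = 0) : (e * ∑ k, (e * w - τ k)⁻¹).im ≠ 0 := by
  simp only [mul_sum, ← div_eq_mul_inv, im_sum, im_div_mul_sub_ofReal e hw]
  rw [← mul_sum]
  refine mul_ne_zero (neg_ne_zero.2 he) (sum_pos (fun k _ => div_pos (hτ k) ?_) univ_nonempty).ne'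
  exact normSq_pos.2 (mul_sub_ofReal_ne_zero he hw (hτ k).ne')

variable {c : ℝ} {P : ℝ[X]}

lemma aeval_eq_mul_prod (hP : P = C c * ∏ k, (X - C (τ k))) (z : ℂ) :
    aeval z P = c * ∏ k, (z - τ k) := by
  simp [hP]

lemma aeval_derivative_eq_mul_sum (hP : P = C c * ∏ k, (X - C (τ k))) {z : ℂ}
    (hz : ∀ k, z ≠ τ k) : aeval z (derivative P) = aeval z P * ∑ k, (z - τ k)⁻¹ := by
  rw [← eval_map_algebraMap, ← eval_map_algebraMap, ← derivative_map, hP]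
  simp only [Polynomial.map_mul, map_C, Polynomial.map_prod, Polynomial.map_sub, map_X,
    derivative_C_mul, eval_mul, eval_C, Complex.coe_algebraMap]
  rw [eval_derivative_prod_X_sub_C _ hz, mul_assoc]

theorem im_eq_zero_of_aeval_mul_eq [Nonempty ι] (hτ : ∀ k, 0 < τ k) (hc : c ≠ 0)
    (hP : P = C c * ∏ k, (X - C (τ k))) {e ε w : ℂ} (he : e.im ≠ 0) (hε : ‖ε‖ = 1)
    (h : aeval (e * w) P = ε * aeval (conj e * w) P) : w.im = 0 := by
  refine im_eq_zero_of_prod_norm_eq hτ he ?_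
  have hnorm := congrArg norm h
  simp only [aeval_eq_mul_prod hP, norm_mul, hε, one_mul, norm_prod] at hnorm
  exact mul_left_cancel₀ (by simpa using hc) hnorm

theorem mul_aeval_derivative_ne [Nonempty ι] (hτ : ∀ k, 0 < τ k) (hc : c ≠ 0)
    (hP : P = C c * ∏ k, (X - C (τ k))) {e ε w : ℂ} (he : e.im ≠ 0) (hw : w.im = 0)
    (h : aeval (e * w) P = ε * aeval (conj e * w) P) :
    e * aeval (e * w) (derivative P) ≠ ε * (conj e * aeval (conj e * w) (derivative P)) := by
  have hz : ∀ k, e * w ≠ τ k := fun k => sub_ne_zero.1 (mul_sub_ofReal_ne_zero he hw (hτ k).ne')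
  have hA : aeval (e * w) P ≠ 0 := by
    rw [aeval_eq_mul_prod hP]
    exact mul_ne_zero (ofReal_ne_zero.2 hc)
      (prod_ne_zero_iff.2 fun k _ => sub_ne_zero.2 (hz k))
  have hconj : conj e * w = conj (e * w) := by rw [map_mul, conj_eq_iff_im.2 hw]
  intro hB
  rw [hconj, aeval_conj] at h
  rw [hconj, aeval_conj, ← map_mul] at hB
  have hreal := im_div_eq_zero_of_eq_mul_conj hA h hB
  rw [aeval_derivative_eq_mul_sum hP hz, mul_left_comm, mul_div_cancel_left₀ _ hA] at hreal
  exact im_mul_sum_inv_ne_zero hτ he hw hreal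

end

theorem zeros_S_real_simple_general
    (n r : ℕ) (hn : 0 < n)
    (P : Polynomial ℝ) (c : ℝ) (hc : c ≠ 0)
    (τv : Fin n → ℝ) (hτpos : ∀ k, 0 < τv k)
    (hP : P = Polynomial.C c * ∏ k, (Polynomial.X - Polynomial.C (τv k)))
    (θ : ℝ) (hθ : Real.sin θ ≠ 0)
    (S : Polynomial ℂ)
    (hS : S = (P.map (algebraMap ℝ ℂ)).comp
        (Polynomial.C (Complex.exp ((θ : ℂ) * Complex.I)) * Polynomial.X) -
      Polynomial.C (Complex.exp (2 * (r : ℂ) * (θ : ℂ) * Complex.I)) *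
        (P.map (algebraMap ℝ ℂ)).comp
          (Polynomial.C (Complex.exp (-(θ : ℂ) * Complex.I)) * Polynomial.X)) :
    S ≠ 0 ∧ ∀ w : ℂ, S.eval w = 0 → w.im = 0 ∧ S.derivative.eval w ≠ 0 := by
  have : Nonempty (Fin n) := ⟨⟨0, hn⟩⟩
  set e := exp (θ * I)
  set ε := exp (2 * r * θ * I)
  have he : e.im ≠ 0 := by rwa [exp_ofReal_mul_I_im]
  have hε : ‖ε‖ = 1 := by simpa using norm_exp_ofReal_mul_I (2 * r * θ)
  have hconj : exp (-θ * I) = conj e := by rw [← exp_conj]; simp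
  rw [hconj] at hS
  have hSeval (w : ℂ) : S.eval w = aeval (e * w) P - ε * aeval (conj e * w) P := by
    simp [hS, eval_comp, eval_map_algebraMap]
  have hSderiv (w : ℂ) : S.derivative.eval w =
      e * aeval (e * w) (derivative P) - ε * (conj e * aeval (conj e * w) (derivative P)) := by
    simp [hS, derivative_comp, derivative_map, eval_comp, eval_map_algebraMap]
  have hreal (w : ℂ) (hw : S.eval w = 0) : w.im = 0 :=
    im_eq_zero_of_aeval_mul_eq hτpos hc hP he hε (sub_eq_zero.1 ((hSeval w).symm.trans hw))
  refine ⟨fun hS0 => by simpa using hreal I (by simp [hS0]),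
    fun w hw => ⟨hreal w hw, fun hd => ?_⟩⟩
  exact mul_aeval_derivative_ne hτpos hc hP he (hreal w hw)
    (sub_eq_zero.1 ((hSeval w).symm.trans hw)) (sub_eq_zero.1 ((hSderiv w).symm.trans hd))

/-- For real `θ` with `sin θ ≠ 0`, the polynomial
`S(τ) = P(τ e^{iθ}) - e^{2irθ} P(τ e^{-iθ})` is not identically zero and all of its complex
zeros are real and simple. -/
theorem zeros_S_real_simple
    (n r : ℕ) (hn : 0 < n) (hr : 0 < r)
    (P : Polynomial ℝ) (c : ℝ) (hc : c ≠ 0)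
    (τv : Fin n → ℝ) (hτmono : Monotone τv) (hτpos : ∀ k, 0 < τv k)
    (hP : P = Polynomial.C c * ∏ k, (Polynomial.X - Polynomial.C (τv k)))
    (θ : ℝ) (hθ : Real.sin θ ≠ 0)
    (S : Polynomial ℂ)
    (hS : S = (P.map (algebraMap ℝ ℂ)).comp
        (Polynomial.C (Complex.exp ((θ : ℂ) * Complex.I)) * Polynomial.X) -
      Polynomial.C (Complex.exp (2 * (r : ℂ) * (θ : ℂ) * Complex.I)) *
        (P.map (algebraMap ℝ ℂ)).comp
          (Polynomial.C (Complex.exp (-(θ : ℂ) * Complex.I)) * Polynomial.X)) :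
    S ≠ 0 ∧ ∀ w : ℂ, S.eval w = 0 → w.im = 0 ∧ S.derivative.eval w ≠ 0 :=
  zeros_S_real_simple_general n r hn P c hc τv hτpos hP θ hθ S hS
end

section
/- For each fixed integer 0 ≤ l < n, the function θ ↦ z(θ; l) takes only real values and is strictly monotone (either strictly increasing throughout or strictly decreasing throughout) on the interval (0, π/r). -/
/-!
Put `t = e^ζ` with `ζ` in the strip `-π < Im ζ < 0`, and let `L(ζ)` be the branch of
`log (∏ (t - τ_k) / t^r)` built from principal logarithms, so that `z = -c e^L`.
For `t₀ = τ(θ; l) e^{-iθ}` the sine law in the triangle `0, τ_k, t₀` gives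
`arg (t₀ - τ_k) = -θ_k`; hence `Im L = rθ - ∑ θ_k = -lπ` along the curve `θ ↦ log t₀`, and
`z = ±c e^{Re L}` is real. Since `Im L' = ∑ τ_k (-Im t) / |t - τ_k|² > 0` on the convex strip,
every difference quotient `(L ζ₂ - L ζ₁) / (ζ₂ - ζ₁)` lies in the upper half-plane; on the level
set `Im L = -lπ` this forces `Re L` to increase strictly as `Im ζ = -θ` decreases.
-/

/-- A tuple `Θ = (θ_1, …, θ_n)` is admissible for `(θ, l)` if `θ < θ_k < π` for all `k`,
`∑ θ_k = rθ + lπ`, and the quantities `τ_k sin θ_k / sin(θ_k - θ)` are all equal. -/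
def IsAdmissible (n : ℕ) (τv : Fin n → ℝ) (r : ℕ) (θ : ℝ) (l : ℕ)
    (Θ : Fin n → ℝ) : Prop :=
  (∀ k, θ < Θ k ∧ Θ k < Real.pi) ∧
  (∑ k, Θ k = r * θ + l * Real.pi) ∧
  ∀ j k, τv j * Real.sin (Θ j) / Real.sin (Θ j - θ) =
    τv k * Real.sin (Θ k) / Real.sin (Θ k - θ)

open Complex ComplexConjugate Set

theorem im_sub_mul_conj_sub_pos {U : Set ℂ} (hU : Convex ℝ U) {F F' : ℂ → ℂ}
    (hF : ∀ ζ ∈ U, HasDerivAt F (F' ζ) ζ) (hF' : ∀ ζ ∈ U, 0 < (F' ζ).im)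
    {ζ₁ ζ₂ : ℂ} (h₁ : ζ₁ ∈ U) (h₂ : ζ₂ ∈ U) (hne : ζ₁ ≠ ζ₂) :
    0 < ((F ζ₂ - F ζ₁) * conj (ζ₂ - ζ₁)).im := by
  set Δ := ζ₂ - ζ₁
  set φ : ℝ → ℝ := fun u => (F (ζ₁ + u * Δ) * conj Δ).im
  have hseg : ∀ u ∈ Icc (0 : ℝ) 1, ζ₁ + u * Δ ∈ U := fun u hu => by
    simpa [Complex.real_smul] using hU.add_smul_sub_mem h₁ h₂ hu
  have hφ : ∀ u ∈ Icc (0 : ℝ) 1, HasDerivAt φ (F' (ζ₁ + u * Δ) * Δ * conj Δ).im u := by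
    intro u hu
    have hline : HasDerivAt (fun w : ℂ => ζ₁ + w * Δ) Δ u := by
      simpa using ((hasDerivAt_id (u : ℂ)).mul_const Δ).const_add ζ₁
    have hFline := (((hF _ (hseg u hu)).comp (u : ℂ) hline).comp_ofReal).mul_const (conj Δ)
    exact imCLM.hasFDerivAt.comp_hasDerivAt u hFline
  have hmono : StrictMonoOn φ (Icc 0 1) := by
    refine strictMonoOn_of_deriv_pos (convex_Icc 0 1)
      (fun u hu => (hφ u hu).continuousAt.continuousWithinAt) fun u hu => ?_
    rw [interior_Icc] at hu
    rw [(hφ u (Ioo_subset_Icc_self hu)).deriv, mul_assoc, mul_conj, im_mul_ofReal]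
    exact mul_pos (hF' _ (hseg u (Ioo_subset_Icc_self hu)))
      (normSq_pos.2 (sub_ne_zero.2 hne.symm))
  have h01 : φ 0 < φ 1 := hmono (by simp) (by simp) one_pos
  simp only [φ, ofReal_zero, zero_mul, add_zero, ofReal_one, one_mul, Δ,
    add_sub_cancel] at h01
  rw [sub_mul, sub_im]
  linarith

theorem re_lt_re_of_im_eq {U : Set ℂ} (hU : Convex ℝ U) {F F' : ℂ → ℂ}
    (hF : ∀ ζ ∈ U, HasDerivAt F (F' ζ) ζ) (hF' : ∀ ζ ∈ U, 0 < (F' ζ).im)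
    {ζ₁ ζ₂ : ℂ} (h₁ : ζ₁ ∈ U) (h₂ : ζ₂ ∈ U) (him : (F ζ₁).im = (F ζ₂).im)
    (hlt : ζ₂.im < ζ₁.im) : (F ζ₁).re < (F ζ₂).re := by
  have hne : ζ₁ ≠ ζ₂ := fun h => hlt.ne' (congrArg im h)
  have hpos := im_sub_mul_conj_sub_pos hU hF hF' h₁ h₂ hne
  simp only [mul_im, sub_re, sub_im, conj_re, conj_im, him, sub_self, zero_mul] at hpos
  nlinarith

def lowerStrip : Set ℂ := {ζ | ζ.im ∈ Ioo (-Real.pi) 0}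

theorem convex_lowerStrip : Convex ℝ lowerStrip := (convex_Ioo _ _).linear_preimage imLm

theorem im_exp_sub_ofReal_neg {ζ : ℂ} (hζ : ζ ∈ lowerStrip) (x : ℝ) : (exp ζ - x).im < 0 := by
  rw [sub_im, ofReal_im, sub_zero, exp_im]
  exact mul_neg_of_pos_of_neg (Real.exp_pos _) (Real.sin_neg_of_neg_of_neg_pi_lt hζ.2 hζ.1)

theorem exp_sub_ofReal_ne_zero {ζ : ℂ} (hζ : ζ ∈ lowerStrip) (x : ℝ) : exp ζ - x ≠ 0 :=
  fun h => by simpa [h] using im_exp_sub_ofReal_neg hζ x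

section LogRatio

variable {ι : Type*} [Fintype ι]

noncomputable def logRatio (τ : ι → ℝ) (r : ℕ) (ζ : ℂ) : ℂ :=
  ∑ k, log (exp ζ - τ k) - r * ζ

theorem hasDerivAt_logRatio (τ : ι → ℝ) (r : ℕ) {ζ : ℂ} (hζ : ζ ∈ lowerStrip) :
    HasDerivAt (logRatio τ r) (∑ k, exp ζ / (exp ζ - τ k) - r) ζ := by
  have hterm : ∀ k ∈ Finset.univ, HasDerivAt (fun w => log (exp w - τ k))
      (exp ζ / (exp ζ - τ k)) ζ := fun k _ => by
    rw [div_eq_mul_inv, mul_comm]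
    exact (hasDerivAt_log (Or.inr (im_exp_sub_ofReal_neg hζ _).ne)).comp ζ
      ((hasDerivAt_exp ζ).sub_const _)
  have h := (HasDerivAt.fun_sum hterm).fun_sub ((hasDerivAt_id' ζ).const_mul (r : ℂ))
  rw [mul_one] at h
  exact h

theorem im_exp_div_exp_sub_ofReal_pos {ζ : ℂ} (hζ : ζ ∈ lowerStrip) {x : ℝ} (hx : 0 < x) :
    0 < (exp ζ / (exp ζ - x)).im := by
  have hexp := im_exp_sub_ofReal_neg hζ 0
  rw [ofReal_zero, sub_zero] at hexp
  have hval : (exp ζ / (exp ζ - x)).im = x * -(exp ζ).im / normSq (exp ζ - x) := by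
    rw [div_im]
    simp only [sub_re, sub_im, ofReal_re, ofReal_im, sub_zero]
    ring
  rw [hval]
  exact div_pos (mul_pos hx (neg_pos.2 hexp)) (normSq_pos.2 (exp_sub_ofReal_ne_zero hζ x))

theorem re_logRatio_lt_of_im_eq [Nonempty ι] {τ : ι → ℝ} (hτ : ∀ k, 0 < τ k) (r : ℕ)
    {ζ₁ ζ₂ : ℂ} (h₁ : ζ₁ ∈ lowerStrip) (h₂ : ζ₂ ∈ lowerStrip)
    (him : (logRatio τ r ζ₁).im = (logRatio τ r ζ₂).im) (hlt : ζ₂.im < ζ₁.im) :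
    (logRatio τ r ζ₁).re < (logRatio τ r ζ₂).re := by
  refine re_lt_re_of_im_eq convex_lowerStrip (fun ζ hζ => hasDerivAt_logRatio τ r hζ)
    (fun ζ hζ => ?_) h₁ h₂ him hlt
  rw [sub_im, natCast_im, sub_zero, im_sum]
  exact Finset.sum_pos (fun k _ => im_exp_div_exp_sub_ofReal_pos hζ (hτ k)) Finset.univ_nonempty

theorem aeval_exp_div_pow_eq_mul_exp_logRatio {τ : ι → ℝ} {r : ℕ} {P : Polynomial ℝ} {c : ℝ}
    (hP : P = Polynomial.C c * ∏ k, (Polynomial.X - Polynomial.C (τ k)))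
    {ζ : ℂ} (hζ : ∀ k, exp ζ - τ k ≠ 0) :
    Polynomial.aeval (exp ζ) P / exp ζ ^ r = c * exp (logRatio τ r ζ) := by
  rw [logRatio, exp_sub, exp_sum, ← exp_nat_mul,
    Finset.prod_congr rfl fun k _ => exp_log (hζ k)]
  simp [hP, mul_div_assoc]

end LogRatio

theorem ofReal_mul_exp_neg_mul_I_sub_ofReal {τ τk θ θk : ℝ} (hθk : Real.sin θk ≠ 0)
    (h : τk * Real.sin θk = τ * Real.sin (θk - θ)) :
    (τ : ℂ) * exp (-θ * I) - τk = ((τ * Real.sin θ / Real.sin θk : ℝ) : ℂ) * exp (-θk * I) := by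
  have hsine : τ * (Real.sin θk * Real.cos θ - Real.cos θk * Real.sin θ) = τk * Real.sin θk := by
    rw [h, Real.sin_sub]
  have hexp : ∀ x : ℝ, exp (-x * I) = Real.cos x - Real.sin x * I := fun x => by
    rw [exp_mul_I, cos_neg, sin_neg, ← ofReal_cos, ← ofReal_sin]
    ring
  rw [hexp, hexp]
  apply Complex.ext <;>
  · simp only [sub_re, sub_im, mul_re, mul_im, ofReal_re, ofReal_im, I_re, I_im]
    field_simp
    linarith

theorem arg_ofReal_mul_exp_neg_mul_I_sub_ofReal {τ τk θ θk : ℝ} (hτ : 0 < τ) (hθ : 0 < θ)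
    (hθθk : θ < θk) (hθk : θk < Real.pi) (h : τk * Real.sin θk = τ * Real.sin (θk - θ)) :
    arg ((τ : ℂ) * exp (-θ * I) - τk) = -θk := by
  have hsinθk : 0 < Real.sin θk := Real.sin_pos_of_pos_of_lt_pi (hθ.trans hθθk) hθk
  have hsinθ : 0 < Real.sin θ := Real.sin_pos_of_pos_of_lt_pi hθ (hθθk.trans hθk)
  rw [ofReal_mul_exp_neg_mul_I_sub_ofReal hsinθk.ne' h, arg_real_mul _ (by positivity),
    ← ofReal_neg, exp_mul_I]
  exact arg_cos_add_sin_mul_I ⟨neg_lt_neg hθk, by linarith⟩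

theorem exp_log_sub_mul_I {τ : ℝ} (hτ : 0 < τ) (θ : ℝ) :
    exp (Real.log τ - θ * I) = τ * exp (-θ * I) := by
  rw [sub_eq_add_neg, exp_add, ← ofReal_exp, Real.exp_log hτ, neg_mul]

theorem exp_eq_ofReal_of_im_eq_neg_nat_mul_pi {w : ℂ} {l : ℕ} (h : w.im = -(l * Real.pi)) :
    exp w = ((-1) ^ l * Real.exp w.re : ℝ) := by
  rw [Complex.ext_iff, exp_re, exp_im, ofReal_re, ofReal_im, h, Real.cos_neg, Real.sin_neg,
    Real.cos_nat_mul_pi, Real.sin_nat_mul_pi]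
  constructor <;> ring

section Admissible

variable {n : ℕ} {τv : Fin n → ℝ} {r l : ℕ} {θ τ : ℝ} {Θ : Fin n → ℝ}

theorem IsAdmissible.lt_pi [Nonempty (Fin n)] (hΘ : IsAdmissible n τv r θ l Θ) : θ < Real.pi :=
  let k := Classical.arbitrary (Fin n)
  (hΘ.1 k).1.trans (hΘ.1 k).2

theorem IsAdmissible.sin_sub_pos (hΘ : IsAdmissible n τv r θ l Θ) (hθ : 0 < θ) (k : Fin n) :
    0 < Real.sin (Θ k - θ) :=
  Real.sin_pos_of_pos_of_lt_pi (sub_pos.2 (hΘ.1 k).1) (by linarith [(hΘ.1 k).2])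

theorem IsAdmissible.tau_pos (hτv : ∀ k, 0 < τv k) (hΘ : IsAdmissible n τv r θ l Θ)
    (hτ : ∀ k, τv k * Real.sin (Θ k) / Real.sin (Θ k - θ) = τ) (hθ : 0 < θ) (k : Fin n) :
    0 < τ := by
  rw [← hτ k]
  have hsin : 0 < Real.sin (Θ k) :=
    Real.sin_pos_of_pos_of_lt_pi (hθ.trans (hΘ.1 k).1) (hΘ.1 k).2
  exact div_pos (mul_pos (hτv k) hsin) (hΘ.sin_sub_pos hθ k)

theorem IsAdmissible.arg_sub (hτv : ∀ k, 0 < τv k) (hΘ : IsAdmissible n τv r θ l Θ)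
    (hτ : ∀ k, τv k * Real.sin (Θ k) / Real.sin (Θ k - θ) = τ) (hθ : 0 < θ) (k : Fin n) :
    arg ((τ : ℂ) * exp (-θ * I) - τv k) = -Θ k :=
  arg_ofReal_mul_exp_neg_mul_I_sub_ofReal (hΘ.tau_pos hτv hτ hθ k) hθ (hΘ.1 k).1 (hΘ.1 k).2 <| by
    rw [← hτ k, div_mul_cancel₀ _ (hΘ.sin_sub_pos hθ k).ne']

theorem IsAdmissible.im_logRatio (hτv : ∀ k, 0 < τv k) (hΘ : IsAdmissible n τv r θ l Θ)
    (hτ : ∀ k, τv k * Real.sin (Θ k) / Real.sin (Θ k - θ) = τ) (hθ : 0 < θ) :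
    (logRatio τv r (Real.log τ - θ * I)).im = -(l * Real.pi) := by
  have harg : ∀ k, (log (exp (Real.log τ - θ * I) - τv k)).im = -Θ k := fun k => by
    rw [log_im, exp_log_sub_mul_I (hΘ.tau_pos hτv hτ hθ k), hΘ.arg_sub hτv hτ hθ k]
  simp [logRatio, harg, hΘ.2.1]

end Admissible

theorem strictMonoOn_or_strictAntiOn_const_mul_exp {s : Set ℝ} {g : ℝ → ℝ}
    (hg : StrictMonoOn g s) {K : ℝ} (hK : K ≠ 0) :
    StrictMonoOn (fun x => K * Real.exp (g x)) s ∨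
      StrictAntiOn (fun x => K * Real.exp (g x)) s := by
  rcases hK.lt_or_gt with hK | hK
  · exact Or.inr fun a ha b hb hab =>
      mul_lt_mul_of_neg_left (Real.exp_lt_exp.2 (hg ha hb hab)) hK
  · exact Or.inl fun a ha b hb hab =>
      mul_lt_mul_of_pos_left (Real.exp_lt_exp.2 (hg ha hb hab)) hK

theorem z_real_strict_monotone_general
    (n r : ℕ) (hn : 0 < n)
    (P : Polynomial ℝ) (c : ℝ) (hc : c ≠ 0)
    (τv : Fin n → ℝ) (hτpos : ∀ k, 0 < τv k)
    (hP : P = Polynomial.C c * ∏ k, (Polynomial.X - Polynomial.C (τv k)))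
    (l : ℕ)
    (Θf : ℝ → Fin n → ℝ)
    (hΘf : ∀ θ ∈ Set.Ioo (0 : ℝ) (Real.pi / r), IsAdmissible n τv r θ l (Θf θ))
    (τf : ℝ → ℝ)
    (hτf : ∀ θ ∈ Set.Ioo (0 : ℝ) (Real.pi / r), ∀ k,
      τv k * Real.sin (Θf θ k) / Real.sin (Θf θ k - θ) = τf θ)
    (zf : ℝ → ℂ)
    (hzf : ∀ θ ∈ Set.Ioo (0 : ℝ) (Real.pi / r),
      zf θ = -(Polynomial.aeval ((τf θ : ℂ) * Complex.exp (-(θ : ℂ) * Complex.I)) P) /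
        ((τf θ : ℂ) * Complex.exp (-(θ : ℂ) * Complex.I)) ^ r) :
    (∀ θ ∈ Set.Ioo (0 : ℝ) (Real.pi / r), (zf θ).im = 0) ∧
    (StrictMonoOn (fun θ => (zf θ).re) (Set.Ioo (0 : ℝ) (Real.pi / r)) ∨
     StrictAntiOn (fun θ => (zf θ).re) (Set.Ioo (0 : ℝ) (Real.pi / r))) := by
  have : Nonempty (Fin n) := ⟨⟨0, hn⟩⟩
  set ζ : ℝ → ℂ := fun θ => Real.log (τf θ) - θ * I
  have hstrip : ∀ θ ∈ Ioo (0 : ℝ) (Real.pi / r), ζ θ ∈ lowerStrip := fun θ hθ => by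
    simpa [ζ, lowerStrip] using ⟨(hΘf θ hθ).lt_pi, hθ.1⟩
  have himL : ∀ θ ∈ Ioo (0 : ℝ) (Real.pi / r), (logRatio τv r (ζ θ)).im = -(l * Real.pi) :=
    fun θ hθ => (hΘf θ hθ).im_logRatio hτpos (hτf θ hθ) hθ.1
  have hz : ∀ θ ∈ Ioo (0 : ℝ) (Real.pi / r),
      zf θ = (-c * (-1) ^ l * Real.exp (logRatio τv r (ζ θ)).re : ℝ) := fun θ hθ => by
    rw [hzf θ hθ, ← exp_log_sub_mul_I ((hΘf θ hθ).tau_pos hτpos (hτf θ hθ) hθ.1 ⟨0, hn⟩), neg_div,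
      aeval_exp_div_pow_eq_mul_exp_logRatio hP fun k => exp_sub_ofReal_ne_zero (hstrip θ hθ) _,
      exp_eq_ofReal_of_im_eq_neg_nat_mul_pi (himL θ hθ)]
    push_cast
    ring
  refine ⟨fun θ hθ => by rw [hz θ hθ, ofReal_im], ?_⟩
  have hmono : StrictMonoOn (fun θ => (logRatio τv r (ζ θ)).re) (Ioo 0 (Real.pi / r)) :=
    fun a ha b hb hab => re_logRatio_lt_of_im_eq hτpos r (hstrip a ha) (hstrip b hb)
      (by rw [himL a ha, himL b hb]) (by simpa [ζ] using hab)
  have hre : EqOn (fun θ => -c * (-1) ^ l * Real.exp (logRatio τv r (ζ θ)).re)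
      (fun θ => (zf θ).re) (Ioo 0 (Real.pi / r)) := fun θ hθ => by simp only [hz θ hθ, ofReal_re]
  exact (strictMonoOn_or_strictAntiOn_const_mul_exp hmono (by simp [hc])).imp
    (·.congr hre) (·.congr hre)

/-- For each fixed `0 ≤ l < n`, the function `θ ↦ z(θ; l)` is real-valued
and strictly monotone on `(0, π/r)`. -/
theorem z_real_strict_monotone
    (n r : ℕ) (hn : 0 < n) (hr : 0 < r) (hmax : 1 < max n r)
    (P : Polynomial ℝ) (c : ℝ) (hc : c ≠ 0)
    (τv : Fin n → ℝ) (hτmono : Monotone τv) (hτpos : ∀ k, 0 < τv k)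
    (hP : P = Polynomial.C c * ∏ k, (Polynomial.X - Polynomial.C (τv k)))
    (hP0 : 0 < P.eval 0)
    (l : ℕ) (hl : l < n)
    (Θf : ℝ → Fin n → ℝ)
    (hΘf : ∀ θ ∈ Set.Ioo (0 : ℝ) (Real.pi / r), IsAdmissible n τv r θ l (Θf θ))
    (τf : ℝ → ℝ)
    (hτf : ∀ θ ∈ Set.Ioo (0 : ℝ) (Real.pi / r), ∀ k,
      τv k * Real.sin (Θf θ k) / Real.sin (Θf θ k - θ) = τf θ)
    (zf : ℝ → ℂ)
    (hzf : ∀ θ ∈ Set.Ioo (0 : ℝ) (Real.pi / r),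
      zf θ = -(Polynomial.aeval ((τf θ : ℂ) * Complex.exp (-(θ : ℂ) * Complex.I)) P) /
        ((τf θ : ℂ) * Complex.exp (-(θ : ℂ) * Complex.I)) ^ r) :
    (∀ θ ∈ Set.Ioo (0 : ℝ) (Real.pi / r), (zf θ).im = 0) ∧
    (StrictMonoOn (fun θ => (zf θ).re) (Set.Ioo (0 : ℝ) (Real.pi / r)) ∨
     StrictAntiOn (fun θ => (zf θ).re) (Set.Ioo (0 : ℝ) (Real.pi / r))) :=
  z_real_strict_monotone_general n r hn P c hc τv hτpos hP l Θf hΘf τf hτf zf hzf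
end

section
/- Assume (n, r) ≠ (2, 1). Then the function θ ↦ τ(θ) (the common value associated with the admissible tuple for (θ, n − 1)) is strictly monotone decreasing on the interval (0, π/r). -/
/-!
Write `triangleAngle (τ_k / τ) θ` for the angle `Θ_k ∈ (0, π)` with `τ sin (Θ_k - θ) = τ_k sin Θ_k`;
it increases with `τ_k / τ`. Fix `x`, freeze `τ = τ(x)` and follow `g(t) = ∑ Θ_k(t) - r t`, which
equals `(n - 1) π` at `t = x`. Wherever `g` is at that level, its derivative
`∑ sin Θ_k cos (Θ_k - t) / sin t - r` is negative: with `ψ_k = π - Θ_k` this is the subadditivity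
of `ψ ↦ sin (2ψ + t) - sin t` on `[0, π - t]` together with `sin ((2r - 1) t) ≤ (2r - 1) sin t`,
the first being strict when `n ≥ 3` and the second when `r ≥ 2`. So `g` only crosses the level
downwards and `g(y) < (n - 1) π` for `y > x`. Were `τ(y) ≥ τ(x)`, the true angles at `y` would
be at most those defining `g(y)`, contradicting `∑ Θ_k(y) = r y + (n - 1) π`.
-/

open Real Set Finset

noncomputable def arccot (x : ℝ) : ℝ := π / 2 - arctan x

lemma arccot_mem_Ioo (x : ℝ) : arccot x ∈ Ioo 0 π := by
  unfold arccot
  constructor <;> linarith [arctan_lt_pi_div_two x, neg_pi_div_two_lt_arctan x]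

lemma arccot_strictAnti : StrictAnti arccot := fun _ _ h => by
  unfold arccot; linarith [arctan_strictMono h]

lemma hasDerivAt_arccot (x : ℝ) : HasDerivAt arccot (-(1 / (1 + x ^ 2))) x :=
  (hasDerivAt_arctan x).const_sub _

lemma one_add_sq_mul_sin_sq_arccot (x : ℝ) : (1 + x ^ 2) * sin (arccot x) ^ 2 = 1 := by
  rw [arccot, sin_pi_div_two_sub, cos_sq_arctan]
  field_simp

lemma cos_arccot (x : ℝ) : cos (arccot x) = x * sin (arccot x) := by
  rw [arccot, cos_pi_div_two_sub, sin_pi_div_two_sub, sin_arctan, cos_arctan]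
  ring

lemma arccot_eq_of_cos_eq_mul_sin {x Θ : ℝ} (h0 : 0 < Θ) (hπ : Θ < π)
    (h : cos Θ = x * sin Θ) : arccot x = Θ := by
  have hx : x = tan (π / 2 - Θ) := by
    rw [tan_pi_div_two_sub, tan_eq_sin_div_cos, inv_div, h,
      mul_div_cancel_right₀ _ (sin_pos_of_pos_of_lt_pi h0 hπ).ne']
  rw [arccot, hx, arctan_tan (by linarith) (by linarith)]
  ring

/-- For `0 < θ < π`, the angle `Θ ∈ (0, π)` with `sin (Θ - θ) = κ sin Θ`, i.e. the argument of
`e^{iθ} - κ`. -/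
noncomputable def triangleAngle (κ θ : ℝ) : ℝ := arccot ((cos θ - κ) / sin θ)

lemma triangleAngle_eq {κ θ Θ : ℝ} (hθ : 0 < sin θ) (h0 : 0 < Θ) (hπ : Θ < π)
    (h : sin (Θ - θ) = κ * sin Θ) : triangleAngle κ θ = Θ := by
  refine arccot_eq_of_cos_eq_mul_sin h0 hπ ?_
  rw [sin_sub] at h
  field_simp
  linear_combination -h

lemma strictMono_triangleAngle {θ : ℝ} (hθ : 0 < sin θ) :
    StrictMono fun κ => triangleAngle κ θ := fun _ _ h =>
  arccot_strictAnti (div_lt_div_of_pos_right (by linarith) hθ)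

lemma eq_triangleAngle_of_mul_sin_div_eq {c θ Θ τ : ℝ} (hc : 0 < c) (hθ : 0 < θ)
    (hΘ : θ < Θ ∧ Θ < π) (h : c * sin Θ / sin (Θ - θ) = τ) :
    0 < τ ∧ Θ = triangleAngle (c / τ) θ := by
  have hsinΘ := sin_pos_of_pos_of_lt_pi (hθ.trans hΘ.1) hΘ.2
  have hsinΘθ := sin_pos_of_pos_of_lt_pi (sub_pos.2 hΘ.1) (by linarith)
  have hτ : 0 < τ := h ▸ by positivity
  refine ⟨hτ, (triangleAngle_eq (sin_pos_of_pos_of_lt_pi hθ (hΘ.1.trans hΘ.2))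
    (hθ.trans hΘ.1) hΘ.2 ?_).symm⟩
  rw [← h]
  field_simp

lemma hasDerivAt_triangleAngle (κ : ℝ) {θ : ℝ} (hθ : sin θ ≠ 0) :
    HasDerivAt (triangleAngle κ)
      (sin (triangleAngle κ θ) * cos (triangleAngle κ θ - θ) / sin θ) θ := by
  set u := (cos θ - κ) / sin θ
  have hu : HasDerivAt (fun θ => (cos θ - κ) / sin θ)
      ((-sin θ * sin θ - (cos θ - κ) * cos θ) / sin θ ^ 2) θ :=
    ((hasDerivAt_cos θ).sub_const κ).div (hasDerivAt_sin θ) hθ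
  refine ((hasDerivAt_arccot u).comp θ hu).congr_deriv ?_
  have hsin : sin (arccot u) ^ 2 = 1 / (1 + u ^ 2) := by
    rw [eq_div_iff (by positivity), mul_comm]; exact one_add_sq_mul_sin_sq_arccot u
  rw [triangleAngle, cos_sub, cos_arccot,
    show ∀ s : ℝ, s * (u * s * cos θ + s * sin θ) = s ^ 2 * (u * cos θ + sin θ) by intros; ring,
    hsin]
  simp only [u]
  field_simp
  ring

section SinDefect

variable {ι : Type*} (α : ℝ) (ψ : ι → ℝ)

noncomputable def sinDefect (s : Finset ι) : ℝ :=
  ∑ i ∈ s, (sin (2 * ψ i + α) - sin α) - (sin (2 * ∑ i ∈ s, ψ i + α) - sin α)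

@[simp]
lemma sinDefect_empty : sinDefect α ψ ∅ = 0 := by simp [sinDefect]

lemma sinDefect_insert [DecidableEq ι] {s : Finset ι} {i : ι} (hi : i ∉ s) :
    sinDefect α ψ (insert i s) = sinDefect α ψ s
      + 4 * sin (ψ i + ∑ j ∈ s, ψ j + α) * sin (ψ i) * sin (∑ j ∈ s, ψ j) := by
  have hsin (a b : ℝ) : sin (2 * a + α) + sin (2 * b + α) - sin (2 * (a + b) + α) - sin α
      = 4 * sin (a + b + α) * sin a * sin b := by
    have e1 : 2 * a + α = (a + b + α) + (a - b) := by ring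
    have e2 : 2 * b + α = (a + b + α) - (a - b) := by ring
    have e3 : 2 * (a + b) + α = (a + b + α) + (a + b) := by ring
    have e4 : α = (a + b + α) - (a + b) := by ring
    rw [e1, e2, e3]
    nth_rewrite 4 [e4]
    simp only [sin_add, sin_sub, cos_add, cos_sub]
    ring
  rw [← hsin]
  simp only [sinDefect, sum_insert hi]
  ring

variable {α ψ}

lemma sinDefect_le_insert [DecidableEq ι] {s : Finset ι} {i : ι} (hi : i ∉ s)
    (hψ : ∀ j ∈ insert i s, 0 ≤ ψ j) (hα : 0 ≤ α) (hs : ∑ j ∈ insert i s, ψ j + α ≤ π) :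
    sinDefect α ψ s ≤ sinDefect α ψ (insert i s) := by
  rw [sum_insert hi] at hs
  have hψi := hψ i (mem_insert_self i s)
  have hS : 0 ≤ ∑ j ∈ s, ψ j := sum_nonneg fun j hj => hψ j (mem_insert_of_mem hj)
  rw [sinDefect_insert α ψ hi, le_add_iff_nonneg_right]
  have := sin_nonneg_of_nonneg_of_le_pi (by linarith) hs
  have := sin_nonneg_of_nonneg_of_le_pi hψi (by linarith)
  have := sin_nonneg_of_nonneg_of_le_pi hS (by linarith)
  positivity

lemma sinDefect_le_of_subset [DecidableEq ι] {s t : Finset ι} (hts : t ⊆ s) (hψ : ∀ i ∈ s, 0 ≤ ψ i)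
    (hα : 0 ≤ α) (hs : ∑ i ∈ s, ψ i + α ≤ π) : sinDefect α ψ t ≤ sinDefect α ψ s := by
  obtain ⟨u, rfl, htu⟩ : ∃ u, s = t ∪ u ∧ Disjoint t u :=
    ⟨s \ t, (union_sdiff_of_subset hts).symm, disjoint_sdiff⟩
  clear hts
  induction u using Finset.induction_on with
  | empty => simp
  | insert i u hi ih =>
    simp only [Finset.union_insert] at hψ hs ⊢
    have hitu : i ∉ t ∪ u := notMem_union.2 ⟨disjoint_right.1 htu (mem_insert_self i u), hi⟩
    have hsub : ∑ j ∈ t ∪ u, ψ j ≤ ∑ j ∈ insert i (t ∪ u), ψ j :=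
      sum_le_sum_of_subset_of_nonneg (subset_insert _ _) fun j hj _ => hψ j hj
    exact (ih (disjoint_insert_right.1 htu).2 (fun j hj => hψ j (mem_insert_of_mem hj))
      (by linarith)).trans (sinDefect_le_insert hitu hψ hα hs)

lemma sinDefect_pair_pos [DecidableEq ι] {i j : ι} (hij : i ≠ j) (hi : 0 < ψ i) (hj : 0 < ψ j)
    (hα : 0 ≤ α) (h : ψ i + ψ j + α < π) : 0 < sinDefect α ψ {i, j} := by
  have hsingle : sinDefect α ψ {j} = 0 := by simp [sinDefect]
  rw [sinDefect_insert α ψ (notMem_singleton.2 hij), sum_singleton, hsingle, zero_add]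
  exact mul_pos (mul_pos (mul_pos four_pos (sin_pos_of_pos_of_lt_pi (by linarith) h))
    (sin_pos_of_pos_of_lt_pi hi (by linarith))) (sin_pos_of_pos_of_lt_pi hj (by linarith))

end SinDefect

lemma abs_sin_nat_mul_le (m : ℕ) (x : ℝ) : |sin (m * x)| ≤ m * |sin x| := by
  induction m with
  | zero => simp
  | succ m ih =>
    calc |sin ((m + 1 : ℕ) * x)| = |sin (m * x) * cos x + cos (m * x) * sin x| := by
          push_cast; rw [add_mul, one_mul, sin_add]
      _ ≤ |sin (m * x)| * |cos x| + |cos (m * x)| * |sin x| := by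
          rw [← abs_mul, ← abs_mul]; exact abs_add_le _ _
      _ ≤ m * |sin x| * 1 + 1 * |sin x| := by
          gcongr
          exacts [abs_cos_le_one x, abs_cos_le_one _]
      _ = (m + 1 : ℕ) * |sin x| := by push_cast; ring

lemma sin_nat_mul_lt {m : ℕ} (hm : 2 ≤ m) {x : ℝ} (h0 : 0 < x) (hπ : x < π) :
    sin (m * x) < m * sin x := by
  obtain ⟨k, rfl⟩ : ∃ k, m = k + 1 := ⟨m - 1, by omega⟩
  have hsin : 0 < sin x := sin_pos_of_pos_of_lt_pi h0 hπ
  have hcos : |cos x| < 1 := by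
    rw [abs_lt]; constructor <;> nlinarith [sin_sq_add_cos_sq x]
  have hk : (0 : ℝ) < k := by exact_mod_cast (by omega : 0 < k)
  calc sin ((k + 1 : ℕ) * x) = sin (k * x) * cos x + cos (k * x) * sin x := by
        push_cast; rw [add_mul, one_mul, sin_add]
    _ ≤ |sin (k * x)| * |cos x| + |cos (k * x)| * sin x := by
        exact add_le_add ((le_abs_self _).trans_eq (abs_mul _ _))
          (mul_le_mul_of_nonneg_right (le_abs_self _) hsin.le)
    _ ≤ k * sin x * |cos x| + 1 * sin x := by
        gcongr
        · simpa [abs_of_pos hsin] using abs_sin_nat_mul_le k x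
        · exact abs_cos_le_one _
    _ < k * sin x * 1 + 1 * sin x := by gcongr
    _ = (k + 1 : ℕ) * sin x := by push_cast; ring

lemma sin_two_mul_pi_sub_add_sub_sin (Θ t : ℝ) :
    sin (2 * (π - Θ) + t) - sin t = -(2 * (sin Θ * cos (Θ - t))) := by
  have e1 : 2 * (π - Θ) + t = -(Θ + (Θ - t)) + 2 * π := by ring
  have e2 : t = Θ - (Θ - t) := by ring
  rw [e1, sin_add_two_pi, sin_neg]
  nth_rewrite 2 [e2]
  simp only [sin_add, sin_sub]
  ring

lemma sum_sin_mul_cos_sub_lt {n r : ℕ} (hr : 0 < r) (hnr : 2 ≤ r ∨ 3 ≤ n) {t : ℝ} (ht : 0 < t)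
    (hrt : r * t < π) {Θ : Fin n → ℝ} (hΘ : ∀ k, Θ k ∈ Ioo 0 π)
    (hsum : ∑ k, Θ k = r * t + (n - 1) * π) :
    ∑ k, sin (Θ k) * cos (Θ k - t) < r * sin t := by
  set ψ : Fin n → ℝ := fun k => π - Θ k
  have hψ : ∀ k, 0 < ψ k := fun k => sub_pos.2 (hΘ k).2
  have hψsum : ∑ k, ψ k = π - r * t := by
    simp only [ψ, sum_sub_distrib, hsum, sum_const, card_univ, Fintype.card_fin, nsmul_eq_mul]
    ring
  have hr1 : (1 : ℝ) ≤ r := by exact_mod_cast hr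
  have htπ : t < π := by nlinarith
  have hψt : ∑ k, ψ k + t ≤ π := by rw [hψsum]; nlinarith
  have hcast : ((2 * r - 1 : ℕ) : ℝ) = 2 * r - 1 := by
    rw [Nat.cast_sub (by omega)]; push_cast; ring
  have hdefect : sinDefect t ψ univ
      = sin ((2 * r - 1 : ℕ) * t) + sin t - 2 * ∑ k, sin (Θ k) * cos (Θ k - t) := by
    have : sin (2 * ∑ k, ψ k + t) = -sin ((2 * r - 1 : ℕ) * t) := by
      rw [hψsum, hcast, show 2 * (π - r * t) + t = -((2 * r - 1) * t) + 2 * π by ring,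
        sin_add_two_pi, sin_neg]
    simp only [sinDefect, this, ψ, sin_two_mul_pi_sub_add_sub_sin, sum_neg_distrib, ← mul_sum]
    ring
  have hD : 0 ≤ sinDefect t ψ univ := by
    simpa using sinDefect_le_of_subset (empty_subset univ) (fun k _ => (hψ k).le) ht.le hψt
  have hB := (le_abs_self _).trans (abs_sin_nat_mul_le (2 * r - 1) t)
  rw [abs_of_pos (sin_pos_of_pos_of_lt_pi ht htπ)] at hB
  rw [hcast] at hdefect hB
  rcases hnr with hr2 | hn3
  · have hB' := sin_nat_mul_lt (m := 2 * r - 1) (by omega) ht htπ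
    rw [hcast] at hB'
    linarith
  · let i : Fin n := ⟨0, by omega⟩
    let j : Fin n := ⟨1, by omega⟩
    have hij : i ≠ j := by simp [i, j, Fin.ext_iff]
    have hpair : ψ i + ψ j < ∑ k, ψ k := by
      rw [← sum_pair hij]
      exact sum_lt_sum_of_subset (subset_univ _) (mem_univ ⟨2, by omega⟩)
        (by simp [i, j, Fin.ext_iff]) (hψ _) fun k _ _ => (hψ k).le
    have hD' := (sinDefect_pair_pos hij (hψ i) (hψ j) ht.le (by linarith)).trans_le
      (sinDefect_le_of_subset (subset_univ _) (fun k _ => (hψ k).le) ht.le hψt)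
    linarith

lemma lt_of_hasDerivAt_neg_of_eq {g g' : ℝ → ℝ} {a b L : ℝ} (hab : a < b)
    (hg : ∀ t ∈ Icc a b, HasDerivAt g (g' t) t) (ha : g a = L)
    (hneg : ∀ t ∈ Icc a b, g t = L → g' t < 0) : g b < L := by
  have hle : ∀ t ∈ Icc a b, g t ≤ L :=
    image_le_of_deriv_right_lt_deriv_boundary' (B := fun _ => L) (B' := 0)
      (fun t ht => (hg t ht).continuousAt.continuousWithinAt)
      (fun t ht => (hg t (Ico_subset_Icc_self ht)).hasDerivWithinAt) ha.le continuousOn_const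
      (fun _ _ => hasDerivWithinAt_const _ _ _) fun t ht => hneg t (Ico_subset_Icc_self ht)
  have hb : b ∈ Icc a b := right_mem_Icc.2 hab.le
  refine (hle b hb).lt_of_ne fun hgb => ?_
  have hmax : IsLocalMaxOn g (Icc a b) b :=
    Filter.eventually_of_mem self_mem_nhdsWithin fun t ht => hgb ▸ hle t ht
  have := hmax.hasFDerivWithinAt_nonpos (hg b hb).hasDerivWithinAt.hasFDerivWithinAt
    (sub_mem_posTangentConeAt_of_segment_subset (segment_symm ℝ a b ▸ segment_subset_Icc hab.le))
  rw [ContinuousLinearMap.toSpanSingleton_apply, smul_eq_mul] at this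
  linarith [mul_pos_of_neg_of_neg (sub_neg.2 hab) (hneg b hb hgb)]

lemma sum_triangleAngle_lt_of_eq {n r : ℕ} (hr : 0 < r) (hnr : 2 ≤ r ∨ 3 ≤ n) (κ : Fin n → ℝ)
    {x y : ℝ} (hx : 0 < x) (hxy : x < y) (hy : r * y < π)
    (hlevel : ∑ k, triangleAngle (κ k) x = r * x + (n - 1) * π) :
    ∑ k, triangleAngle (κ k) y < r * y + (n - 1) * π := by
  have hr1 : (1 : ℝ) ≤ r := by exact_mod_cast hr
  have hIcc : ∀ t ∈ Icc x y, 0 < t ∧ r * t < π ∧ 0 < sin t := fun t ht => by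
    have ht0 := hx.trans_le ht.1
    have hrt : r * t < π := by nlinarith [ht.2]
    exact ⟨ht0, hrt, sin_pos_of_pos_of_lt_pi ht0 (by nlinarith)⟩
  suffices ∑ k, triangleAngle (κ k) y - r * y < (n - 1) * π by linarith
  refine lt_of_hasDerivAt_neg_of_eq (g := fun t => ∑ k, triangleAngle (κ k) t - r * t)
    (g' := fun t => ∑ k, sin (triangleAngle (κ k) t) * cos (triangleAngle (κ k) t - t) / sin t
      - r * 1) hxy (fun t ht => ?_) (by linarith) fun t ht hgt => ?_
  · exact (HasDerivAt.fun_sum fun k _ => hasDerivAt_triangleAngle (κ k)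
      (hIcc t ht).2.2.ne').sub ((hasDerivAt_id' t).const_mul (r : ℝ))
  · obtain ⟨ht0, hrt, hsin⟩ := hIcc t ht
    rw [← sum_div, mul_one, sub_neg, div_lt_iff₀ hsin]
    exact sum_sin_mul_cos_sub_lt hr hnr ht0 hrt (fun k => arccot_mem_Ioo _) (by linarith)

theorem tau_strict_anti_general
    (n r : ℕ) (hn : 0 < n) (hr : 0 < r) (hmax : 1 < max n r)
    (hne : ¬(n = 2 ∧ r = 1))
    (τv : Fin n → ℝ) (hτpos : ∀ k, 0 < τv k)
    (Θf : ℝ → Fin n → ℝ)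
    (hΘf : ∀ θ ∈ Set.Ioo (0 : ℝ) (Real.pi / r), IsAdmissible n τv r θ (n - 1) (Θf θ))
    (τf : ℝ → ℝ)
    (hτf : ∀ θ ∈ Set.Ioo (0 : ℝ) (Real.pi / r), ∀ k,
      τv k * Real.sin (Θf θ k) / Real.sin (Θf θ k - θ) = τf θ) :
    StrictAntiOn τf (Set.Ioo (0 : ℝ) (Real.pi / r)) := by
  have hnr : 2 ≤ r ∨ 3 ≤ n := by rw [lt_max_iff] at hmax; omega
  have hcast : ((n - 1 : ℕ) : ℝ) = n - 1 := by rw [Nat.cast_sub hn, Nat.cast_one]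
  have hrθ : ∀ θ ∈ Ioo 0 (π / r), r * θ < π := fun θ hθ =>
    (lt_div_iff₀' (by exact_mod_cast hr)).1 hθ.2
  have hsin : ∀ θ ∈ Ioo 0 (π / r), 0 < sin θ := fun θ hθ =>
    sin_pos_of_pos_of_lt_pi hθ.1
      ((le_mul_of_one_le_left hθ.1.le (Nat.one_le_cast.2 hr)).trans_lt (hrθ θ hθ))
  have hangle : ∀ θ ∈ Ioo 0 (π / r), ∀ k, 0 < τf θ ∧ Θf θ k = triangleAngle (τv k / τf θ) θ :=
    fun θ hθ k => eq_triangleAngle_of_mul_sin_div_eq (hτpos k) hθ.1 ((hΘf θ hθ).1 k) (hτf θ hθ k)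
  have hsum : ∀ θ ∈ Ioo 0 (π / r), ∑ k, Θf θ k = r * θ + (n - 1) * π := fun θ hθ =>
    hcast ▸ (hΘf θ hθ).2.1
  intro x hx y hy hxy
  by_contra! hle
  have hmono : ∑ k, Θf y k ≤ ∑ k, triangleAngle (τv k / τf x) y :=
    sum_le_sum fun k _ => (hangle y hy k).2 ▸ (strictMono_triangleAngle (hsin y hy)).monotone
      (div_le_div_of_nonneg_left (hτpos k).le (hangle x hx k).1 hle)
  have hcross := sum_triangleAngle_lt_of_eq hr hnr (fun k => τv k / τf x) hx.1 hxy (hrθ y hy)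
    (hsum x hx ▸ sum_congr rfl fun k _ => ((hangle x hx k).2).symm)
  linarith [hsum y hy]

/-- If `(n, r) ≠ (2, 1)`, the function `θ ↦ τ(θ)` (with `l = n - 1`) is
strictly monotone decreasing on `(0, π/r)`. -/
theorem tau_strict_anti
    (n r : ℕ) (hn : 0 < n) (hr : 0 < r) (hmax : 1 < max n r)
    (hne : ¬(n = 2 ∧ r = 1))
    (P : Polynomial ℝ) (c : ℝ) (hc : c ≠ 0)
    (τv : Fin n → ℝ) (hτmono : Monotone τv) (hτpos : ∀ k, 0 < τv k)
    (hP : P = Polynomial.C c * ∏ k, (Polynomial.X - Polynomial.C (τv k)))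
    (hP0 : 0 < P.eval 0)
    (Θf : ℝ → Fin n → ℝ)
    (hΘf : ∀ θ ∈ Set.Ioo (0 : ℝ) (Real.pi / r), IsAdmissible n τv r θ (n - 1) (Θf θ))
    (τf : ℝ → ℝ)
    (hτf : ∀ θ ∈ Set.Ioo (0 : ℝ) (Real.pi / r), ∀ k,
      τv k * Real.sin (Θf θ k) / Real.sin (Θf θ k - θ) = τf θ) :
    StrictAntiOn τf (Set.Ioo (0 : ℝ) (Real.pi / r)) :=
  tau_strict_anti_general n r hn hr hmax hne τv hτpos Θf hΘf τf hτf
end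

section
/- Let z ∈ ℝ, set d = max{n, r}, and suppose that the polynomial t ↦ P(t) + z t^r has degree exactly d with leading coefficient c, and that its d complex zeros t_0, t_1, …, t_{d−1} are pairwise distinct. Then for every m ≥ 0, H_m(z) = −(1/c) · Σ_{k=0}^{d−1} t_k^{−(m+1)} · Π_{j ≠ k} (t_k − t_j)^{−1}. -/
/-!
Over `ℂ`, evaluating the generating relation at `z` says that `∑ H_m(z) tᵐ` is the inverse of
`Q(t) = P(t) + z tʳ = c₀ ∏ₖ (t - tₖ)` in `ℂ⟦t⟧`. Lagrange's identity `∑ₖ ∏_{j ≠ k} (t - tⱼ)/(tₖ - tⱼ) = 1`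
is the partial fraction decomposition `1/Q = (1/c₀) ∑ₖ wₖ/(t - tₖ)` with `wₖ = ∏_{j ≠ k} (tₖ - tⱼ)⁻¹`,
and `1/(t - tₖ) = -∑ tᵐ/tₖ^{m+1}` because `tₖ ≠ 0`, as `Q(0) = P(0) > 0`. Comparing coefficients of
the two inverses of `Q` gives the formula.
-/

open Polynomial PowerSeries Lagrange

section PartialFractions

variable {F : Type*} [Field F]

theorem PowerSeries.mk_inv_pow_succ_mul_X_sub_C {a : F} (ha : a ≠ 0) :
    mk (fun m => (a ^ (m + 1))⁻¹) * ((Polynomial.X - Polynomial.C a : F[X]) : F⟦X⟧) = -1 := by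
  have hgeom : mk (fun m => (a ^ (m + 1))⁻¹) = invUnitsSub (Units.mk0 a ha) := by
    ext m
    simp [coeff_invUnitsSub]
  have hinv := invUnitsSub_mul_sub (Units.mk0 a ha)
  rw [Units.val_mk0] at hinv
  rw [hgeom, Polynomial.coe_sub, Polynomial.coe_X, Polynomial.coe_C]
  linear_combination -hinv

variable {ι : Type*} [DecidableEq ι] {s : Finset ι} {v : ι → F}

theorem PowerSeries.mk_sum_inv_pow_mul_nodalWeight_mul_nodal (hs : s.Nonempty)
    (hvs : Set.InjOn v s) (hv0 : ∀ i ∈ s, v i ≠ 0) :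
    mk (fun m => ∑ i ∈ s, (v i ^ (m + 1))⁻¹ * nodalWeight s v i) * (nodal s v : F⟦X⟧) = -1 := by
  have hsplit : mk (fun m => ∑ i ∈ s, (v i ^ (m + 1))⁻¹ * nodalWeight s v i) =
      ∑ i ∈ s, PowerSeries.C (nodalWeight s v i) * mk (fun m => (v i ^ (m + 1))⁻¹) := by
    ext m
    simp [map_sum, mul_comm]
  have hterm : ∀ i ∈ s, PowerSeries.C (nodalWeight s v i) * mk (fun m => (v i ^ (m + 1))⁻¹) *
      (nodal s v : F⟦X⟧) = -(Lagrange.basis s v i : F⟦X⟧) := by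
    intro i hi
    rw [nodal_eq_mul_nodal_erase hi, basis_eq_prod_sub_inv_mul_nodal_div hi,
      ← nodal_erase_eq_nodal_div hi, Polynomial.coe_mul, Polynomial.coe_mul, Polynomial.coe_C,
      mul_assoc, ← mul_assoc (mk _), mk_inv_pow_succ_mul_X_sub_C (hv0 i hi)]
    ring
  rw [hsplit, Finset.sum_mul, Finset.sum_congr rfl hterm, Finset.sum_neg_distrib,
    ← Polynomial.coe_one, ← sum_basis hvs hs]
  simp only [← coeToPowerSeries.ringHom_apply, map_sum]

theorem PowerSeries.coe_C_mul_nodal_mul_mk_eq_one {c : F} (hc : c ≠ 0) (hs : s.Nonempty)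
    (hvs : Set.InjOn v s) (hv0 : ∀ i ∈ s, v i ≠ 0) :
    ((Polynomial.C c * nodal s v : F[X]) : F⟦X⟧) *
      mk (fun m => -(1 / c) * ∑ i ∈ s, (v i ^ (m + 1))⁻¹ * nodalWeight s v i) = 1 := by
  have hscale : mk (fun m => -(1 / c) * ∑ i ∈ s, (v i ^ (m + 1))⁻¹ * nodalWeight s v i) =
      PowerSeries.C (-(1 / c)) * mk (fun m => ∑ i ∈ s, (v i ^ (m + 1))⁻¹ * nodalWeight s v i) := by
    ext m
    rw [PowerSeries.coeff_C_mul, coeff_mk, coeff_mk]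
  have hC : PowerSeries.C c * PowerSeries.C (-(1 / c)) = -1 := by
    rw [← map_mul, mul_neg, mul_one_div_cancel hc, map_neg, map_one]
  rw [hscale, Polynomial.coe_mul, Polynomial.coe_C]
  linear_combination (PowerSeries.C c * PowerSeries.C (-(1 / c))) *
    mk_sum_inv_pow_mul_nodalWeight_mul_nodal hs hvs hv0 - hC

end PartialFractions

theorem PowerSeries.map_comp_evalRingHom_mk_eq_coe_add_C_mul_X_pow {R S : Type*}
    [CommSemiring R] [CommSemiring S] (f : R →+* S) (P : R[X]) (r : ℕ) (z : R) :
    map (f.comp (evalRingHom z))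
        (mk fun k => Polynomial.C (P.coeff k) + if k = r then (Polynomial.X : R[X]) else 0) =
      ((P.map f + Polynomial.C (f z) * Polynomial.X ^ r : S[X]) : S⟦X⟧) := by
  ext k
  by_cases hk : k = r <;> simp [PowerSeries.coeff_map, hk]

theorem H_partial_fractions_general
    (n r : ℕ) (hr : 0 < r)
    (P : Polynomial ℝ)
    (hP0 : 0 < P.eval 0)
    (H : ℕ → Polynomial ℝ)
    (hH : PowerSeries.mk H *
        PowerSeries.mk (fun k => Polynomial.C (P.coeff k) +
          if k = r then (Polynomial.X : Polynomial ℝ) else 0) = 1)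
    (z : ℝ) (d : ℕ) (hd : d = max n r)
    (c₀ : ℂ) (hc₀ : c₀ ≠ 0) (t : Fin d → ℂ) (hdist : Function.Injective t)
    (hfact : P.map (algebraMap ℝ ℂ) + Polynomial.C (z : ℂ) * Polynomial.X ^ r =
      Polynomial.C c₀ * ∏ k, (Polynomial.X - Polynomial.C (t k))) :
    ∀ m : ℕ, (((H m).eval z : ℝ) : ℂ) =
      -(1 / c₀) * ∑ k, ((t k) ^ (m + 1))⁻¹ *
        ∏ j ∈ Finset.univ.erase k, (t k - t j)⁻¹ := by
  intro m
  set Q := P.map (algebraMap ℝ ℂ) + Polynomial.C (z : ℂ) * Polynomial.X ^ r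
  have hHQ : mk (fun m => (((H m).eval z : ℝ) : ℂ)) * (Q : ℂ⟦X⟧) = 1 := by
    have h := congrArg (PowerSeries.map ((algebraMap ℝ ℂ).comp (evalRingHom z))) hH
    rw [map_mul, map_one, map_comp_evalRingHom_mk_eq_coe_add_C_mul_X_pow] at h
    convert h using 2
    · ext k
      simp [PowerSeries.coeff_map]
    · simp [Q]
  have ht0 : ∀ k, t k ≠ 0 := by
    intro k hk
    have hroot : Q.eval (t k) = 0 := by
      rw [hfact, eval_mul, ← nodal_eq, eval_nodal_at_node (Finset.mem_univ k), mul_zero]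
    simp only [Q, hk, eval_add, eval_map, eval₂_at_zero, coeff_zero_eq_eval_zero,
      Complex.coe_algebraMap, eval_mul, eval_C, eval_pow, eval_X, zero_pow hr.ne', mul_zero,
      add_zero, Complex.ofReal_eq_zero] at hroot
    exact hP0.ne' hroot
  have huniv : (Finset.univ : Finset (Fin d)).Nonempty :=
    Finset.univ_nonempty_iff.mpr ⟨⟨0, by omega⟩⟩
  have hQT : (Q : ℂ⟦X⟧) * mk (fun m => -(1 / c₀) * ∑ k, ((t k) ^ (m + 1))⁻¹ *
      ∏ j ∈ Finset.univ.erase k, (t k - t j)⁻¹) = 1 := by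
    rw [hfact]
    exact coe_C_mul_nodal_mul_mk_eq_one hc₀ huniv hdist.injOn fun k _ => ht0 k
  simpa using congrArg (PowerSeries.coeff m) (left_inv_eq_right_inv hHQ hQT)

/-- If the polynomial `t ↦ P(t) + z t^r` has degree exactly
`d = max{n, r}` with leading coefficient `c₀` and pairwise distinct complex zeros
`t_0, …, t_{d-1}`, then `H_m(z) = -(1/c₀) ∑_k t_k^{-(m+1)} ∏_{j ≠ k} (t_k - t_j)⁻¹`. -/
theorem H_partial_fractions
    (n r : ℕ) (hn : 0 < n) (hr : 0 < r)
    (P : Polynomial ℝ) (c : ℝ) (hc : c ≠ 0)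
    (τv : Fin n → ℝ) (hτmono : Monotone τv) (hτpos : ∀ k, 0 < τv k)
    (hP : P = Polynomial.C c * ∏ k, (Polynomial.X - Polynomial.C (τv k)))
    (hP0 : 0 < P.eval 0)
    (H : ℕ → Polynomial ℝ)
    (hH : PowerSeries.mk H *
        PowerSeries.mk (fun k => Polynomial.C (P.coeff k) +
          if k = r then (Polynomial.X : Polynomial ℝ) else 0) = 1)
    (z : ℝ) (d : ℕ) (hd : d = max n r)
    (c₀ : ℂ) (hc₀ : c₀ ≠ 0) (t : Fin d → ℂ) (hdist : Function.Injective t)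
    (hfact : P.map (algebraMap ℝ ℂ) + Polynomial.C (z : ℂ) * Polynomial.X ^ r =
      Polynomial.C c₀ * ∏ k, (Polynomial.X - Polynomial.C (t k))) :
    ∀ m : ℕ, (((H m).eval z : ℝ) : ℂ) =
      -(1 / c₀) * ∑ k, ((t k) ^ (m + 1))⁻¹ *
        ∏ j ∈ Finset.univ.erase k, (t k - t j)⁻¹ :=
  H_partial_fractions_general n r hr P hP0 H hH z d hd c₀ hc₀ t hdist hfact
end

section
/- Assume r = 1 and n ≥ 3. Then t_b < 0, t_b is a zero of the polynomial P(t) + b t of multiplicity exactly 2, and every other complex zero t of P(t) + b t satisfies |t| > |t_b|. -/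
open Polynomial Finset

/-!
With `r = 1` we have `R = P - X P'`, and `R 0 = P 0 > 0` forces `t_b < 0`. The equation
`R t_b = 0` says that the line `t ↦ -b t` is tangent to the graph of `P` at `t_b`, so `t_b` is a
zero of `Q = P + b X` of multiplicity at least two, and exactly two because
`P''(t_b) = P(t_b) ∑_{j ≠ k} 1 / ((t_b - τ_j)(t_b - τ_k)) ≠ 0`.

For the other zeros put `α_k = t_b / (t_b - τ_k) ∈ (0, 1)`; the tangency condition reads
`∑ α_k = 1`, and a zero `w` of `Q` gives `∏ (1 - α_k (1 - u)) = u` for `u = w / t_b`. If `|u| ≤ 1`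
and `u ≠ 1`, all factors lie in the open unit disc, and the horocycle ratio
`h z = |1 - z|² / (1 - |z|²)` of Julia's lemma satisfies `h (z w) ≤ h z + h w` and
`h (1 - α (1 - u)) < α h u`, whence `h u < ∑ α_k h u = h u`.
-/

lemma add_mul_sq_div_le (a c s A D : ℝ) (hA : 0 < A) (hD : 0 < D) :
    (a + s * c) ^ 2 / (A + s ^ 2 * D) ≤ a ^ 2 / A + c ^ 2 / D := by
  rw [div_add_div _ _ hA.ne' hD.ne', div_le_div_iff₀ (by positivity) (by positivity)]
  nlinarith [sq_nonneg (s * a * D - c * A)]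

noncomputable def horocycleRatio (z : ℂ) : ℝ := ‖1 - z‖ ^ 2 / (1 - ‖z‖ ^ 2)

lemma horocycleRatio_mul_le {z w : ℂ} (hz : ‖z‖ < 1) (hw : ‖w‖ < 1) :
    horocycleRatio (z * w) ≤ horocycleRatio z + horocycleRatio w := by
  have hz' : 0 < 1 - ‖z‖ ^ 2 := by nlinarith [norm_nonneg z]
  have hw' : 0 < 1 - ‖w‖ ^ 2 := by nlinarith [norm_nonneg w]
  have htri : ‖1 - z * w‖ ≤ ‖1 - z‖ + ‖z‖ * ‖1 - w‖ :=
    calc ‖1 - z * w‖ = ‖(1 - z) + z * (1 - w)‖ := by ring_nf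
      _ ≤ ‖1 - z‖ + ‖z‖ * ‖1 - w‖ := (norm_add_le _ _).trans_eq (by rw [norm_mul])
  have hden : 1 - ‖z * w‖ ^ 2 = (1 - ‖z‖ ^ 2) + ‖z‖ ^ 2 * (1 - ‖w‖ ^ 2) := by
    rw [norm_mul]; ring
  calc horocycleRatio (z * w)
      ≤ (‖1 - z‖ + ‖z‖ * ‖1 - w‖) ^ 2 / ((1 - ‖z‖ ^ 2) + ‖z‖ ^ 2 * (1 - ‖w‖ ^ 2)) := by
        rw [horocycleRatio, hden]
        gcongr
    _ ≤ horocycleRatio z + horocycleRatio w := add_mul_sq_div_le _ _ _ _ _ hz' hw'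

lemma norm_prod_lt_one {ι : Type*} {s : Finset ι} (hs : s.Nonempty) {f : ι → ℂ}
    (hf : ∀ k ∈ s, ‖f k‖ < 1) : ‖∏ k ∈ s, f k‖ < 1 := by
  induction hs using Finset.Nonempty.cons_induction with
  | singleton a => simpa using hf a (mem_singleton_self a)
  | cons a s _ hs ih =>
    rw [prod_cons, norm_mul]
    exact mul_lt_one_of_nonneg_of_lt_one_left (norm_nonneg _) (hf a (mem_cons_self a s))
      (ih fun k hk => hf k (mem_cons_of_mem hk)).le

lemma horocycleRatio_prod_le {ι : Type*} {s : Finset ι} (hs : s.Nonempty) {f : ι → ℂ}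
    (hf : ∀ k ∈ s, ‖f k‖ < 1) :
    horocycleRatio (∏ k ∈ s, f k) ≤ ∑ k ∈ s, horocycleRatio (f k) := by
  induction hs using Finset.Nonempty.cons_induction with
  | singleton a => simp
  | cons a s _ hs ih =>
    have hf' : ∀ k ∈ s, ‖f k‖ < 1 := fun k hk => hf k (mem_cons_of_mem hk)
    rw [prod_cons, sum_cons]
    exact (horocycleRatio_mul_le (hf a (mem_cons_self a s)) (norm_prod_lt_one hs hf')).trans
      (add_le_add_right (ih hf') _)

lemma one_sub_norm_sq_one_sub_mul (α : ℝ) (u : ℂ) :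
    1 - ‖1 - α * (1 - u)‖ ^ 2 = α * ((1 - ‖u‖ ^ 2) + (1 - α) * ‖1 - u‖ ^ 2) := by
  simp only [Complex.sq_norm, Complex.normSq_apply, Complex.sub_re, Complex.sub_im,
    Complex.mul_re, Complex.mul_im, Complex.ofReal_re, Complex.ofReal_im, Complex.one_re,
    Complex.one_im]
  ring

lemma norm_one_sub_mul_lt_one {α : ℝ} (hα₀ : 0 < α) (hα₁ : α < 1) {u : ℂ} (hu : ‖u‖ ≤ 1)
    (hu₁ : u ≠ 1) : ‖1 - α * (1 - u)‖ < 1 := by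
  have h := one_sub_norm_sq_one_sub_mul α u
  have hN : 0 < ‖1 - u‖ := norm_pos_iff.2 (sub_ne_zero.2 hu₁.symm)
  have hD : 0 < 1 - ‖u‖ ^ 2 + (1 - α) * ‖1 - u‖ ^ 2 := by
    nlinarith [norm_nonneg u, mul_pos (sub_pos.2 hα₁) (pow_pos hN 2)]
  nlinarith [norm_nonneg (1 - α * (1 - u)), mul_pos hα₀ hD]

lemma horocycleRatio_one_sub_mul_lt {α : ℝ} (hα₀ : 0 < α) (hα₁ : α < 1) {u : ℂ}
    (hu : ‖u‖ < 1) (hu₁ : u ≠ 1) :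
    horocycleRatio (1 - α * (1 - u)) < α * horocycleRatio u := by
  have hN : 0 < ‖1 - u‖ := norm_pos_iff.2 (sub_ne_zero.2 hu₁.symm)
  have hD : 0 < 1 - ‖u‖ ^ 2 := by nlinarith [norm_nonneg u]
  have hnum : ‖1 - (1 - α * (1 - u))‖ ^ 2 = α ^ 2 * ‖1 - u‖ ^ 2 := by
    rw [sub_sub_cancel, norm_mul, Complex.norm_real, Real.norm_of_nonneg hα₀.le, mul_pow]
  rw [horocycleRatio, horocycleRatio, hnum, one_sub_norm_sq_one_sub_mul, mul_div_assoc',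
    div_lt_div_iff₀ (by positivity) hD]
  nlinarith [mul_pos (mul_pos (mul_pos hα₀ hα₀) (pow_pos hN 2))
    (mul_pos (sub_pos.2 hα₁) (pow_pos hN 2))]

lemma eq_one_of_prod_one_sub_mul_eq {ι : Type*} [Fintype ι] [Nonempty ι] {α : ι → ℝ}
    (hα₀ : ∀ k, 0 < α k) (hα₁ : ∀ k, α k < 1) (hα : ∑ k, α k = 1) {u : ℂ} (hu : ‖u‖ ≤ 1)
    (hprod : ∏ k, (1 - α k * (1 - u)) = u) : u = 1 := by
  by_contra hu₁
  have hfac : ∀ k ∈ univ, ‖1 - α k * (1 - u)‖ < 1 := fun k _ =>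
    norm_one_sub_mul_lt_one (hα₀ k) (hα₁ k) hu hu₁
  have hu' : ‖u‖ < 1 := hprod ▸ norm_prod_lt_one univ_nonempty hfac
  have := calc horocycleRatio u
      = horocycleRatio (∏ k, (1 - α k * (1 - u))) := by rw [hprod]
    _ ≤ ∑ k, horocycleRatio (1 - α k * (1 - u)) := horocycleRatio_prod_le univ_nonempty hfac
    _ < ∑ k, α k * horocycleRatio u :=
        sum_lt_sum_of_nonempty univ_nonempty fun k _ =>
          horocycleRatio_one_sub_mul_lt (hα₀ k) (hα₁ k) hu' hu₁
    _ = horocycleRatio u := by rw [← sum_mul, hα, one_mul]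
  exact this.false

lemma rootMultiplicity_eq_two {R : Type*} [CommRing R] [NoZeroDivisors R] [CharZero R]
    {p : R[X]} {t : R} (h₀ : p.IsRoot t) (h₁ : (derivative p).IsRoot t)
    (h₂ : ¬ (derivative (derivative p)).IsRoot t) : p.rootMultiplicity t = 2 := by
  have hp : p ≠ 0 := by rintro rfl; simp at h₂
  have hlt : 1 < p.rootMultiplicity t :=
    (lt_rootMultiplicity_iff_isRoot_iterate_derivative hp).2 fun m hm => by
      interval_cases m <;> assumption
  have hle : ¬ 2 < p.rootMultiplicity t := fun h =>
    h₂ ((lt_rootMultiplicity_iff_isRoot_iterate_derivative hp).1 h 2 le_rfl)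
  omega

section ProdXSubC

variable {K ι : Type*} [Field K] [DecidableEq ι]

lemma derivative_prod_X_sub_C (s : Finset ι) (a : ι → K) :
    derivative (∏ k ∈ s, (X - C (a k))) = ∑ k ∈ s, ∏ j ∈ s.erase k, (X - C (a j)) := by
  simp [derivative_prod_finset]

lemma eval_derivative_prod_X_sub_C {s : Finset ι} {a : ι → K} {t : K}
    (ht : ∀ k ∈ s, t ≠ a k) :
    (derivative (∏ k ∈ s, (X - C (a k)))).eval t =
      (∏ k ∈ s, (t - a k)) * ∑ k ∈ s, (t - a k)⁻¹ := by
  rw [derivative_prod_X_sub_C, eval_finsetSum, mul_sum]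
  refine sum_congr rfl fun k hk => ?_
  rw [eval_prod, ← mul_prod_erase s _ hk, mul_right_comm,
    mul_inv_cancel₀ (sub_ne_zero.2 (ht k hk)), one_mul]
  simp

lemma eval_derivative_derivative_prod_X_sub_C {s : Finset ι} {a : ι → K} {t : K}
    (ht : ∀ k ∈ s, t ≠ a k) :
    (derivative (derivative (∏ k ∈ s, (X - C (a k))))).eval t =
      (∏ k ∈ s, (t - a k)) * ∑ k ∈ s, ∑ j ∈ s.erase k, (t - a k)⁻¹ * (t - a j)⁻¹ := by
  rw [derivative_prod_X_sub_C, derivative_sum, eval_finsetSum, mul_sum]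
  refine sum_congr rfl fun k hk => ?_
  rw [eval_derivative_prod_X_sub_C fun j hj => ht j (mem_of_mem_erase hj), ← mul_sum,
    ← mul_prod_erase s _ hk, ← mul_assoc, mul_comm (t - a k), mul_assoc _ (t - a k),
    mul_inv_cancel₀ (sub_ne_zero.2 (ht k hk)), mul_one]

end ProdXSubC

section CriticalPoint

variable {ι : Type*} [Fintype ι]

lemma sum_div_sub_eq_one {K : Type*} [Field K] {P : K[X]} {c : K} {τ : ι → K}
    (hP : P = C c * ∏ k, (X - C (τ k))) (hc : c ≠ 0) {t : K} (ht : ∀ k, t ≠ τ k)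
    (hcrit : P.eval t = t * (derivative P).eval t) : ∑ k, t / (t - τ k) = 1 := by
  classical
  have hne : c * ∏ k, (t - τ k) ≠ 0 :=
    mul_ne_zero hc (prod_ne_zero_iff.2 fun k _ => sub_ne_zero.2 (ht k))
  subst hP
  rw [derivative_C_mul, eval_C_mul, eval_C_mul, eval_derivative_prod_X_sub_C fun k _ => ht k,
    eval_prod] at hcrit
  simp only [eval_sub, eval_X, eval_C] at hcrit
  simp_rw [div_eq_mul_inv, ← mul_sum]
  exact mul_left_cancel₀ hne (by linear_combination -hcrit)

lemma rootMultiplicity_add_C_mul_X_eq_two [Nontrivial ι] {P : ℝ[X]} {c : ℝ} {τ : ι → ℝ}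
    (hP : P = C c * ∏ k, (X - C (τ k))) (hc : c ≠ 0) {t : ℝ} (hτ : ∀ k, t < τ k) (ht : t ≠ 0)
    (hcrit : P.eval t = t * (derivative P).eval t) :
    (P + C (-P.eval t / t) * X).rootMultiplicity t = 2 := by
  classical
  refine rootMultiplicity_eq_two ?_ ?_ ?_
  · simp [field]
  · simp [hcrit, field]
  · have hinv : ∀ k, (t - τ k)⁻¹ < 0 := fun k => inv_lt_zero.2 (sub_neg.2 (hτ k))
    have hsum : 0 < ∑ k, ∑ j ∈ univ.erase k, (t - τ k)⁻¹ * (t - τ j)⁻¹ :=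
      sum_pos (fun k _ => sum_pos (fun j _ => mul_pos_of_neg_of_neg (hinv k) (hinv j))
        univ_nontrivial.erase_nonempty) univ_nonempty
    have hprod : ∏ k, (t - τ k) ≠ 0 := prod_ne_zero_iff.2 fun k _ => (sub_neg.2 (hτ k)).ne
    have hP'' : derivative (derivative (P + C (-P.eval t / t) * X)) =
        C c * derivative (derivative (∏ k, (X - C (τ k)))) := by
      simp [hP]
    rw [IsRoot, hP'', eval_C_mul, eval_derivative_derivative_prod_X_sub_C fun k _ => (hτ k).ne]
    exact mul_ne_zero hc (mul_ne_zero hprod hsum.ne')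

lemma abs_lt_norm_of_aeval_add_C_mul_X_eq_zero [Nonempty ι] {P : ℝ[X]} {c : ℝ} {τ : ι → ℝ}
    (hP : P = C c * ∏ k, (X - C (τ k))) (hc : c ≠ 0) (hτ : ∀ k, 0 < τ k) {t : ℝ} (ht : t < 0)
    (hcrit : P.eval t = t * (derivative P).eval t) {w : ℂ}
    (hw : aeval w (P + C (-P.eval t / t) * X) = 0) (hwt : w ≠ t) : |t| < ‖w‖ := by
  by_contra! hle
  have hα₀ : ∀ k, 0 < t / (t - τ k) := fun k => div_pos_of_neg_of_neg ht (by linarith [hτ k])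
  have hα₁ : ∀ k, t / (t - τ k) < 1 := fun k =>
    (div_lt_one_of_neg (by linarith [hτ k])).2 (by linarith [hτ k])
  have hα : ∑ k, t / (t - τ k) = 1 :=
    sum_div_sub_eq_one hP hc (fun k => (ht.trans (hτ k)).ne) hcrit
  have hu : ‖w / t‖ ≤ 1 := by
    rw [norm_div, Complex.norm_real, Real.norm_eq_abs]
    exact div_le_one_of_le₀ hle (abs_nonneg t)
  have htC : (t : ℂ) ≠ 0 := by exact_mod_cast ht.ne
  have hτC : ∀ k, (t : ℂ) - τ k ≠ 0 := fun k => by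
    exact_mod_cast (sub_neg.2 (ht.trans (hτ k))).ne
  have hPw : (c : ℂ) * ∏ k, (w - τ k) = (c : ℂ) * ((∏ k, ((t : ℂ) - τ k)) * (w / t)) := by
    subst hP
    simp only [eval_mul, eval_C, eval_prod, eval_sub, eval_X, aeval_def, eval₂_add, eval₂_mul,
      eval₂_C, Complex.coe_algebraMap, eval₂_finsetProd, eval₂_sub, eval₂_X, map_div₀,
      Complex.ofReal_neg, Complex.ofReal_mul, Complex.ofReal_prod, Complex.ofReal_sub] at hw
    linear_combination hw
  have hprod : ∏ k, (1 - ((t / (t - τ k) : ℝ) : ℂ) * (1 - w / t)) = w / t :=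
    calc ∏ k, (1 - ((t / (t - τ k) : ℝ) : ℂ) * (1 - w / t))
        = ∏ k, ((w - τ k) / (t - τ k)) := prod_congr rfl fun k _ => by
          push_cast; field_simp [hτC k]; ring
      _ = w / t := by
          rw [prod_div_distrib, mul_left_cancel₀ (Complex.ofReal_ne_zero.2 hc) hPw,
            mul_div_cancel_left₀ _ (prod_ne_zero_iff.2 fun k _ => hτC k)]
  exact hwt ((div_eq_one_iff_eq htC).1 (eq_one_of_prod_one_sub_mul_eq hα₀ hα₁ hα hu hprod))

end CriticalPoint

theorem double_zero_at_tb_general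
    (n r : ℕ) (hn3 : 3 ≤ n) (hr1 : r = 1)
    (P : Polynomial ℝ) (c : ℝ) (hc : c ≠ 0)
    (τv : Fin n → ℝ) (hτpos : ∀ k, 0 < τv k)
    (hP : P = Polynomial.C c * ∏ k, (Polynomial.X - Polynomial.C (τv k)))
    (hP0 : 0 < P.eval 0)
    (R : Polynomial ℝ)
    (hR : R = Polynomial.C (r : ℝ) * Polynomial.X ^ (r - 1) * P -
        Polynomial.X ^ r * Polynomial.derivative P)
    (tb : ℝ)
    (htb : tb ≤ 0 ∧ R.eval tb = 0 ∧ ∀ t : ℝ, t ≤ 0 → R.eval t = 0 → t ≤ tb)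
    (b : ℝ) (hb : b = -P.eval tb / tb) :
    tb < 0 ∧
    (P + Polynomial.C b * Polynomial.X ^ r).rootMultiplicity tb = 2 ∧
    ∀ w : ℂ, Polynomial.aeval w (P + Polynomial.C b * Polynomial.X ^ r) = 0 →
      w ≠ (tb : ℂ) → |tb| < ‖w‖ := by
  subst hr1 hb
  obtain ⟨htb_nonpos, hRtb, -⟩ := htb
  have hReval : ∀ t, R.eval t = P.eval t - t * (derivative P).eval t := fun t => by simp [hR]
  have htb : tb < 0 := htb_nonpos.lt_of_ne fun h => by
    rw [hReval, h, zero_mul, sub_zero] at hRtb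
    exact hP0.ne' hRtb
  have hcrit : P.eval tb = tb * (derivative P).eval tb :=
    sub_eq_zero.1 ((hReval tb).symm.trans hRtb)
  have : Nontrivial (Fin n) := Fin.nontrivial_iff_two_le.2 (by omega)
  rw [pow_one]
  exact ⟨htb,
    rootMultiplicity_add_C_mul_X_eq_two hP hc (fun k => htb.trans (hτpos k)) htb.ne hcrit,
    fun w hw hwt => abs_lt_norm_of_aeval_add_C_mul_X_eq_zero hP hc hτpos htb hcrit hw hwt⟩

/-- If `r = 1` and `n ≥ 3`, then `t_b < 0`, `t_b` is a zero of
`P(t) + b t` of multiplicity exactly `2`, and every other complex zero `t` of `P(t) + b t`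
satisfies `|t| > |t_b|`. -/
theorem double_zero_at_tb
    (n r : ℕ) (hn3 : 3 ≤ n) (hr1 : r = 1)
    (P : Polynomial ℝ) (c : ℝ) (hc : c ≠ 0)
    (τv : Fin n → ℝ) (hτmono : Monotone τv) (hτpos : ∀ k, 0 < τv k)
    (hP : P = Polynomial.C c * ∏ k, (Polynomial.X - Polynomial.C (τv k)))
    (hP0 : 0 < P.eval 0)
    (R : Polynomial ℝ)
    (hR : R = Polynomial.C (r : ℝ) * Polynomial.X ^ (r - 1) * P -
        Polynomial.X ^ r * Polynomial.derivative P)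
    (tb : ℝ)
    (htb : tb ≤ 0 ∧ R.eval tb = 0 ∧ ∀ t : ℝ, t ≤ 0 → R.eval t = 0 → t ≤ tb)
    (b : ℝ) (hb : b = -P.eval tb / tb) :
    tb < 0 ∧
    (P + Polynomial.C b * Polynomial.X ^ r).rootMultiplicity tb = 2 ∧
    ∀ w : ℂ, Polynomial.aeval w (P + Polynomial.C b * Polynomial.X ^ r) = 0 →
      w ≠ (tb : ℂ) → |tb| < ‖w‖ :=
  double_zero_at_tb_general n r hn3 hr1 P c hc τv hτpos hP hP0 R hR tb htb b hb
end
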